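/- Let A be a constant game, Φ a legal position of ⫰ᵀA, and v any infinite bitstring. Then Φ^{≼v} is a legal position of A. -/
import Mathlib


/- ============================================================
   Computability Logic: runs, constant games, delays, static
   games, and the tight/loose toggling-branching recurrences.
   ============================================================ -/

/-- The two players: `top` (⊤, the machine) and `bot` (⊥, the environment). -/
inductive Player : Type
  | top : Player
  | bot : Player
deriving DecidableEq

/-- The adversary (opposite) of a player. -/
def Player.opp : Player → Player
  | .top => .bot
  | .bot => .top

/-- Symbols of the fixed move alphabet: the bits `0` and `1`, the period `.`,
the colon `:`, and (countably many) other characters. -/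
inductive CSym : Type
  | b0 : CSym
  | b1 : CSym
  | dot : CSym
  | colon : CSym
  | ch : ℕ → CSym
deriving DecidableEq

/-- A move is a finite string over the fixed alphabet. -/
abbrev Move := List CSym

/-- A labmove is a move together with the label of the player who made it. -/
abbrev Labmove := Player × Move

/-- A run is a finite or infinite sequence of labmoves. -/
abbrev Run := Stream'.Seq Labmove

/-- A position is a finite run. -/
abbrev Position := List Labmove

/-- The symbol encoding a bit. -/
def bitSym (b : Bool) : CSym := if b then .b1 else .b0

/-- The move that is the bare bitstring `w`. -/
def bitsMove (w : List Bool) : Move := w.map bitSym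

/-- The (replicative-style) move `w:`. -/
def repMove (w : List Bool) : Move := bitsMove w ++ [.colon]

/-- The (non-replicative-style) move `w.α`. -/
def dotMove (w : List Bool) (α : Move) : Move := bitsMove w ++ (.dot :: α)

/-- Decode a move that is a bare bitstring. -/
def asBits : Move → Option (List Bool)
  | [] => some []
  | .b0 :: r => (asBits r).map (false :: ·)
  | .b1 :: r => (asBits r).map (true :: ·)
  | _ => none

/-- Decode a move of the form `w:` (`w` a bitstring). -/
def asRep : Move → Option (List Bool)
  | [.colon] => some []
  | .b0 :: r => (asRep r).map (false :: ·)
  | .b1 :: r => (asRep r).map (true :: ·)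
  | _ => none

/-- Decode a move of the form `w.α` (`w` a bitstring, `α` a move), splitting at
the (unique such) period. -/
def splitDot : Move → Option (List Bool × Move)
  | .dot :: r => some ([], r)
  | .b0 :: r => (splitDot r).map (fun p => (false :: p.1, p.2))
  | .b1 :: r => (splitDot r).map (fun p => (true :: p.1, p.2))
  | _ => none

/-- Infinite bitstrings. -/
abbrev IStr := ℕ → Bool

/-- The length-`n` initial segment of an infinite bitstring. -/
def prefOf (n : ℕ) (v : IStr) : List Bool := (List.range n).map v

/-- `u` is a finite initial segment of the infinite bitstring `v`. -/
def IsPref (u : List Bool) (v : IStr) : Prop := u = prefOf u.length v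

instance (u : List Bool) (v : IStr) : Decidable (IsPref u v) := by
  unfold IsPref; infer_instance

/-- The finite bitstring `w` with infinitely many `0`s appended. -/
def ezero (w : List Bool) : IStr := fun i => w.getD i false

/-- The finite bitstring `w` followed by the infinite bitstring `v`. -/
def capp (w : List Bool) (v : IStr) : IStr :=
  fun i => if i < w.length then w.getD i false else v (i - w.length)

/-- The indices of `s` whose entry is kept by the filtering function `p`. -/
def fmPred {α β : Type*} (p : α → Option β) (s : Stream'.Seq α) (i : ℕ) : Prop :=
  ∃ a, s.get? i = some a ∧ (p a).isSome

/-- `p` has at least `n+1` witnesses. -/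
def HasNth (p : ℕ → Prop) (n : ℕ) : Prop :=
  ∀ hf : (setOf p).Finite, n < hf.toFinset.card

open Classical in
/-- The subsequence of a (finite or infinite) sequence obtained by
filtering/translating its entries through `p`. -/
noncomputable def seqFilterMap {α β : Type*} (p : α → Option β) (s : Stream'.Seq α) :
    Stream'.Seq β := by
  refine ⟨fun k => if HasNth (fmPred p s) k
    then ((s.get? (Nat.nth (fmPred p s) k)).bind p) else none, ?_⟩
  intro n hn
  have hval : ∀ k, HasNth (fmPred p s) k →
      (if HasNth (fmPred p s) k then ((s.get? (Nat.nth (fmPred p s) k)).bind p) else none)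
        ≠ none := by
    intro k hk
    obtain ⟨a, ha, hpa⟩ := Nat.nth_mem (p := fmPred p s) k hk
    rw [if_pos hk, ha]
    simpa [Option.isSome_iff_ne_none] using hpa
  by_cases h : HasNth (fmPred p s) (n + 1)
  · exact absurd hn (hval n (fun hf => lt_of_le_of_lt (Nat.le_succ n) (h hf)))
  · exact if_neg h

/-- The filtered subsequence of a position (finite-run analogue of `seqFilterMap`). -/
def listFilterMap {β : Type*} (p : Labmove → Option β) (Φ : Position) : List β :=
  Φ.filterMap p

/-- The filtering function for `Ω^{≼v}`: keep labmoves `π u.α` with `u` an initial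
segment of `v`, turning them into `π α`. -/
def subFn (v : IStr) (lm : Labmove) : Option Labmove :=
  match splitDot lm.2 with
  | some (u, α) => if IsPref u v then some (lm.1, α) else none
  | none => none

/-- `Ω^{≼v}` for a run `Ω`. -/
noncomputable def subAt (v : IStr) (Γ : Run) : Run := seqFilterMap (subFn v) Γ

/-- `Φ^{≼v}` for a position `Φ`. -/
def subAtL (v : IStr) (Φ : Position) : Position := Φ.filterMap (subFn v)

/-- The result of changing every label in a run to its opposite. -/
def negRun (Γ : Run) : Run := Γ.map (fun lm => (lm.1.opp, lm.2))

/-- The subsequence of `π`-labeled moves of a run. -/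
noncomputable def subseqOf (π : Player) (Γ : Run) : Run :=
  seqFilterMap (fun lm => if lm.1 = π then some lm else none) Γ

/-- The subsequence of `π`-labeled moves of a position. -/
def subL (π : Player) (Φ : Position) : Position :=
  Φ.filter (fun lm => decide (lm.1 = π))

/-- The indices of the `π`-labeled moves of a run. -/
def labPred (π : Player) (Γ : Run) (i : ℕ) : Prop := ∃ m, Γ.get? i = some (π, m)

/-- `Δ` is a `π`-delay of `Γ`: (1) for both players `π'`, the subsequence of
`π'`-labeled moves of `Δ` is identical to that of `Γ`; (2) whenever the `n`-th
`π`-labeled move is made later than the `k`-th `¬π`-labeled move in `Γ`, so is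
it in `Δ`. -/
def Delay (π : Player) (Δ Γ : Run) : Prop :=
  (∀ π' : Player, subseqOf π' Δ = subseqOf π' Γ) ∧
  (∀ n k : ℕ, HasNth (labPred π Γ) n → HasNth (labPred π.opp Γ) k →
    Nat.nth (labPred π Γ) n > Nat.nth (labPred π.opp Γ) k →
    Nat.nth (labPred π Δ) n > Nat.nth (labPred π.opp Δ) k)

/-- A constant game: a set of legal runs and an assignment of winners. -/
structure Game where
  legal : Run → Prop
  wins : Run → Player

/-- Well-formedness of a constant game: the empty position is legal, and a run
is legal iff all of its finite initial segments are. -/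
def Game.IsGame (A : Game) : Prop :=
  A.legal (Stream'.Seq.ofList []) ∧
  ∀ Γ : Run, A.legal Γ ↔ ∀ n : ℕ, A.legal (Stream'.Seq.ofList (Stream'.Seq.take n Γ))

/-- The run `Γ` is `π`-illegal in `A`: its shortest illegal initial segment has
the form `⟨Φ, πα⟩`. -/
def Game.IllegalBy (A : Game) (π : Player) (Γ : Run) : Prop :=
  ∃ n : ℕ,
    (∀ m ≤ n, A.legal (Stream'.Seq.ofList (Stream'.Seq.take m Γ))) ∧
    ¬ A.legal (Stream'.Seq.ofList (Stream'.Seq.take (n + 1) Γ)) ∧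
    ∃ m : Move, Γ.get? n = some (π, m)

/-- `Γ` is a `π`-won run of `A`: either `Γ` is legal and `Wn` names `π`, or `Γ`
is `¬π`-illegal (an illegal run is won by the adversary of the first offender). -/
def Game.won (A : Game) (π : Player) (Γ : Run) : Prop :=
  (A.legal Γ ∧ A.wins Γ = π) ∨ A.IllegalBy π.opp Γ

/-- A constant game is static iff `π`-won runs are preserved by `π`-delays. -/
def Game.Static (A : Game) : Prop :=
  ∀ (π : Player) (Γ Δ : Run), Delay π Δ Γ → A.won π Γ → A.won π Δ

/-- The negation `¬A` of a constant game: the roles of the players are interchanged. -/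
def Game.neg (A : Game) : Game where
  legal Γ := A.legal (negRun Γ)
  wins Γ := (A.wins (negRun Γ)).opp

/-- `w` is an actual node of the position `Φ`: `w` is empty, or `w = u0` or
`w = u1` for some bitstring `u` such that `Φ` contains the move `u:`. -/
def ActualNode (Φ : Position) (w : List Bool) : Prop :=
  w = [] ∨ ∃ (u : List Bool) (b : Bool), w = u ++ [b] ∧ ∃ π : Player, (π, repMove u) ∈ Φ

/-- `w` is an outer actual node of `Φ`: an actual node that is not a proper
prefix of any other actual node of `Φ`. -/
def OuterNode (Φ : Position) (w : List Bool) : Prop :=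
  ActualNode Φ w ∧ ∀ w' : List Bool, ActualNode Φ w' → w <+: w' → w = w'

/-- `m` is a legal move by `π` in the legal position `Φ` of `⫰ᵀA`: a switch
move, a replicative move, or a non-replicative move. -/
def TightMove (A : Game) (Φ : Position) (π : Player) (m : Move) : Prop :=
  (π = .bot ∧ ∃ w : List Bool, asBits m = some w ∧ ActualNode Φ w) ∨
  (π = .bot ∧ ∃ w : List Bool, asRep m = some w ∧ OuterNode Φ w) ∨
  (∃ (w : List Bool) (α : Move), splitDot m = some (w, α) ∧ ActualNode Φ w ∧
    ∀ v : IStr, A.legal (Stream'.Seq.ofList (subAtL (capp w v) Φ ++ [(π, α)])))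

/-- The legal positions of `⫰ᵀA`. -/
inductive TightLegalPos (A : Game) : Position → Prop
  | nil : TightLegalPos A []
  | snoc {Φ : Position} {π : Player} {m : Move} :
      TightLegalPos A Φ → TightMove A Φ π m → TightLegalPos A (Φ ++ [(π, m)])

/-- The indices of the switch moves (by player `π`) of a run: `π`-labeled moves
whose move part is a bare bitstring. -/
def SwSetP (π : Player) (Γ : Run) : Set ℕ :=
  {i | ∃ (m : Move) (w : List Bool), Γ.get? i = some (π, m) ∧ asBits m = some w}

open Classical in
/-- The index of the last switch move (by `π`) of a run, when there are finitely
many and at least one (junk value `0` otherwise). -/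
noncomputable def lastSwitchIdxP (π : Player) (Γ : Run) : ℕ :=
  if h : (SwSetP π Γ).Finite ∧ (SwSetP π Γ).Nonempty then
    h.1.toFinset.max' (h.1.toFinset_nonempty.mpr h.2)
  else 0

open Classical in
/-- The bitstring of the last switch move (by `π`) of a run; the empty bitstring
if there are no switch moves (or infinitely many). -/
noncomputable def lastSwitchBitsP (π : Player) (Γ : Run) : List Bool :=
  if (SwSetP π Γ).Finite ∧ (SwSetP π Γ).Nonempty then
    ((Γ.get? (lastSwitchIdxP π Γ)).bind (fun lm => asBits lm.2)).getD []
  else []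

/-- The infinite bitstring `t`: the last (`⊥`-made) switch move of `Γ` with
infinitely many `0`s appended, or the infinite string of `0`s if there are no
switch moves. -/
noncomputable def tStream (Γ : Run) : IStr := ezero (lastSwitchBitsP .bot Γ)

open Classical in
/-- The tight toggling-branching recurrence `⫰ᵀA`. -/
noncomputable def tight (A : Game) : Game where
  legal Γ := ∀ n : ℕ, TightLegalPos A (Stream'.Seq.take n Γ)
  wins Γ :=
    if (SwSetP .bot Γ).Finite ∧ A.won .bot (subAt (tStream Γ) Γ) then .bot else .top

/-- The tight toggling-branching corecurrence `⫯ᵀA = ¬⫰ᵀ¬A`. -/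
noncomputable def cotight (A : Game) : Game := Game.neg (tight (Game.neg A))

/-- The shape of legal labmoves of `⫰ᴸA`: `⊥w` (a switch move) for a bitstring
`w`, or `πw.α`. -/
def LooseShape (lm : Labmove) : Prop :=
  (lm.1 = .bot ∧ ∃ w : List Bool, asBits lm.2 = some w) ∨
  (∃ (w : List Bool) (α : Move), splitDot lm.2 = some (w, α))

open Classical in
/-- The loose toggling-branching recurrence `⫰ᴸA`. -/
noncomputable def loose (A : Game) : Game where
  legal Γ := (∀ (i : ℕ) (lm : Labmove), Γ.get? i = some lm → LooseShape lm) ∧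
    ∀ v : IStr, A.legal (subAt v Γ)
  wins Γ :=
    if (SwSetP .bot Γ).Finite ∧ A.won .bot (subAt (tStream Γ) Γ) then .bot else .top

/-- The loose toggling-branching corecurrence `⫯ᴸA = ¬⫰ᴸ¬A`. -/
noncomputable def coloose (A : Game) : Game := Game.neg (loose (Game.neg A))

/-- The sequence of (bitstrings of) switch moves made by `π` in a run, in order. -/
noncomputable def swSeq (π : Player) (Γ : Run) : Stream'.Seq (List Bool) :=
  seqFilterMap (fun lm => if lm.1 = π then asBits lm.2 else none) Γ

/-- The move `i.α` (component prefix for parallel combinations). -/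
def compMove (i : ℕ) (α : Move) : Move := .ch i :: .dot :: α

/-- `Δ^{i.}`: the labmoves of the form `π i.α` of `Δ`, with the prefix `i.` removed. -/
noncomputable def proj (i : ℕ) (Δ : Run) : Run :=
  seqFilterMap (fun lm =>
    match lm.2 with
    | .ch j :: .dot :: α => if j = i then some (lm.1, α) else none
    | _ => none) Δ

open Classical in
/-- The parallel disjunction `A ∨ B`. -/
noncomputable def Game.por (A B : Game) : Game where
  legal Δ :=
    (∀ (k : ℕ) (lm : Labmove), Δ.get? k = some lm →
      ∃ (i : ℕ) (α : Move), (i = 1 ∨ i = 2) ∧ lm.2 = compMove i α) ∧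
    A.legal (proj 1 Δ) ∧ B.legal (proj 2 Δ)
  wins Δ :=
    if A.won .top (proj 1 Δ) ∨ B.won .top (proj 2 Δ) then .top else .bot

lemma asBits_splitDot_none {m : Move} {w : List Bool} (h : asBits m = some w) :
    splitDot m = none := by
  induction m generalizing w with
  | nil => simp [splitDot]
  | cons c r ihm =>
    cases c <;> simp_all [asBits, splitDot]
    · cases h0 : asBits r with
      | none => simp [asBits, h0] at h
      | some w' => simp [asBits, h0] at h; rw [ihm h0]
    · cases h0 : asBits r with
      | none => simp [asBits, h0] at h
      | some w' => simp [asBits, h0] at h; rw [ihm h0]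

lemma asRep_splitDot_none {m : Move} {w : List Bool} (h : asRep m = some w) :
    splitDot m = none := by
  induction m generalizing w with
  | nil => simp [asRep] at h
  | cons c r ihm =>
    cases c <;> simp_all [asRep, splitDot]
    · cases h0 : asRep r with
      | none => simp [asRep, h0] at h
      | some w' => simp [asRep, h0] at h; rw [ihm h0]
    · cases h0 : asRep r with
      | none => simp [asRep, h0] at h
      | some w' => simp [asRep, h0] at h; rw [ihm h0]

lemma capp_pref {w : List Bool} {v : IStr} (hpr : IsPref w v) :
    capp w (fun i => v (i + w.length)) = v := by
  funext i
  unfold capp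
  by_cases hi : i < w.length
  · rw [if_pos hi]
    have := congrArg (fun l => l.getD i false) hpr
    simpa [prefOf, List.getD, List.getElem?_map, hi, List.getElem?_range hi] using this
  · rw [if_neg hi]
    push_neg at hi
    show v (i - w.length + w.length) = v i
    congr 1
    omega

/-- If `Φ` is a legal position of `⫰ᵀA` and `v` is any infinite
bitstring, then `Φ^{≼v}` is a legal position of `A`. -/
theorem tight_legalPos_subAt (A : Game) (hA : A.IsGame) (Φ : Position)
    (hΦ : TightLegalPos A Φ) (v : IStr) :
    A.legal (Stream'.Seq.ofList (subAtL v Φ)) := by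
  induction hΦ with
  | nil => exact hA.1
  | @snoc Φ π m hleg hmv ih =>
    have happ : subAtL v (Φ ++ [(π, m)]) =
        subAtL v Φ ++ List.filterMap (subFn v) [(π, m)] := by
      simp [subAtL, List.filterMap_append]
    rw [happ]
    cases hfn : subFn v (π, m) with
    | none => simpa [List.filterMap, hfn] using ih
    | some lm =>
      unfold subFn at hfn
      cases hsd : splitDot m with
      | none => rw [hsd] at hfn; exact absurd hfn (by simp)
      | some p =>
        obtain ⟨u, α⟩ := p
        rw [hsd] at hfn
        dsimp only at hfn
        by_cases hpr : IsPref u v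
        · rw [if_pos hpr] at hfn
          have hlm : lm = (π, α) := by simpa using hfn.symm
          subst hlm
          rcases hmv with ⟨_, w, hw, _⟩ | ⟨_, w, hw, _⟩ | ⟨w, β, hw, _, hlegal⟩
          · rw [asBits_splitDot_none hw] at hsd; exact absurd hsd (by simp)
          · rw [asRep_splitDot_none hw] at hsd; exact absurd hsd (by simp)
          · have h2 : (w, β) = (u, α) := Option.some.inj (hw.symm.trans hsd)
            obtain ⟨h3, h4⟩ := Prod.mk.injEq .. ▸ h2
            subst h3; subst h4
            have := hlegal (fun i => v (i + w.length))
            rw [capp_pref hpr] at this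
            simpa [List.filterMap, subFn, hsd, hpr] using this
        · rw [if_neg hpr] at hfn; exact absurd hfn (by simp)
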